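/- arXiv:1203.0580 — 6 statements merged into one kernel-verified Lean document; each statement's English description precedes it below -/
import Mathlib

section
/- Let L_d : ℝ^n × ℝ^n → ℝ be a C² discrete Lagrangian, U ⊆ ℝ^n × ℝ^n an open set, and σ : U → ℝ^n a C¹ map satisfying −D_1 L_d(q, σ(q,p)) = p for all (q,p) ∈ U (i.e. σ provides a local inverse of the discrete Legendre transform 𝔽⁻L_d). Define the discrete Hamiltonian map Φ : U → ℝ^n × ℝ^n by Φ(q,p) = (σ(q,p), D_2 L_d(q, σ(q,p))). Then Φ is symplectic: at every (q,p) ∈ U and for all u, v ∈ ℝ^n × ℝ^n, Ω(DΦ(q,p)[u], DΦ(q,p)[v]) = Ω(u,v), where Ω is the canonical symplectic form Ω((a,b),(c,d)) = ⟨b,c⟩ − ⟨a,d⟩ on ℝ^n × ℝ^n ≅ T*ℝ^n. -/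
open scoped RealInnerProductSpace

/-- Gradient of a discrete Lagrangian with respect to its first argument. -/
noncomputable def grad1 {n : ℕ}
    (Ld : EuclideanSpace ℝ (Fin n) × EuclideanSpace ℝ (Fin n) → ℝ)
    (a b : EuclideanSpace ℝ (Fin n)) : EuclideanSpace ℝ (Fin n) :=
  gradient (fun x => Ld (x, b)) a

/-- Gradient of a discrete Lagrangian with respect to its second argument. -/
noncomputable def grad2 {n : ℕ}
    (Ld : EuclideanSpace ℝ (Fin n) × EuclideanSpace ℝ (Fin n) → ℝ)
    (a b : EuclideanSpace ℝ (Fin n)) : EuclideanSpace ℝ (Fin n) :=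
  gradient (fun y => Ld (a, y)) b

/-- The canonical symplectic bilinear form on `ℝⁿ × ℝⁿ ≅ T*ℝⁿ`:
`Ω((a,b),(c,d)) = ⟨b,c⟩ − ⟨a,d⟩`. -/
noncomputable def Omega {n : ℕ}
    (u v : EuclideanSpace ℝ (Fin n) × EuclideanSpace ℝ (Fin n)) : ℝ :=
  ⟪u.2, v.1⟫ - ⟪u.1, v.2⟫

/-!
Write `ψ z = (z.1, σ z)` and let `B` be the derivative at `qp` of `z ↦ ∇L_d (ψ z)`, so that
`B = ∇²L_d ∘ Dψ`. Differentiating the constraint `−D₁L_d(q, σ(q,p)) = p` gives `(B x).1 = −x.2`,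
while `DΦ x = (Dσ x, (B x).2)`. Symmetry of the Hessian,
`⟪(B x).1, y.1⟫ + ⟪(B x).2, Dσ y⟫ = ⟪(B y).1, x.1⟫ + ⟪(B y).2, Dσ x⟫`,
then rearranges into `Ω(DΦ u, DΦ v) = Ω(u, v)`.
-/

open ContinuousLinearMap InnerProductSpace Filter Topology

section GradientPair

variable {E F : Type*} [NormedAddCommGroup E] [InnerProductSpace ℝ E] [CompleteSpace E]
  [NormedAddCommGroup F] [InnerProductSpace ℝ F] [CompleteSpace F]

/-- The Riesz map of `E × F` for the pairing `⟪x.1, y.1⟫ + ⟪x.2, y.2⟫` (`E × F` carries no inner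
product instance). -/
noncomputable def prodRiesz : ((E × F) →L[ℝ] ℝ) →L[ℝ] E × F :=
  ((toDual ℝ E).symm.toContinuousLinearEquiv.toContinuousLinearMap.comp
      ((compL ℝ E (E × F) ℝ).flip (inl ℝ E F))).prod
    ((toDual ℝ F).symm.toContinuousLinearEquiv.toContinuousLinearMap.comp
      ((compL ℝ F (E × F) ℝ).flip (inr ℝ E F)))

theorem inner_prodRiesz_add (φ : (E × F) →L[ℝ] ℝ) (y : E × F) :
    ⟪(prodRiesz φ).1, y.1⟫ + ⟪(prodRiesz φ).2, y.2⟫ = φ y := by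
  simp [prodRiesz, ← map_add]

theorem gradient_prodMk_left_eq {f : E × F → ℝ} {a : E} {b : F}
    (hf : DifferentiableAt ℝ f (a, b)) :
    gradient (fun x => f (x, b)) a = (prodRiesz (fderiv ℝ f (a, b))).1 := by
  have h : HasFDerivAt (fun x => f (x, b)) (fderiv ℝ f (a, b) ∘L inl ℝ E F) a :=
    hf.hasFDerivAt.comp a (hasFDerivAt_prodMk_left a b)
  rw [gradient, h.fderiv]
  rfl

theorem gradient_prodMk_right_eq {f : E × F → ℝ} {a : E} {b : F}
    (hf : DifferentiableAt ℝ f (a, b)) :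
    gradient (fun y => f (a, y)) b = (prodRiesz (fderiv ℝ f (a, b))).2 := by
  have h : HasFDerivAt (fun y => f (a, y)) (fderiv ℝ f (a, b) ∘L inr ℝ E F) b :=
    hf.hasFDerivAt.comp b (hasFDerivAt_prodMk_right a b)
  rw [gradient, h.fderiv]
  rfl

noncomputable def gradientPair (f : E × F → ℝ) (z : E × F) : E × F :=
  (gradient (fun x => f (x, z.2)) z.1, gradient (fun y => f (z.1, y)) z.2)

theorem hasFDerivAt_gradientPair {f : E × F → ℝ} {w : E × F} (hf : ContDiffAt ℝ 2 f w) :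
    HasFDerivAt (gradientPair f) (prodRiesz ∘L fderiv ℝ (fderiv ℝ f) w) w := by
  have hfd : ∀ᶠ z in 𝓝 w, DifferentiableAt ℝ f z :=
    (hf.eventually (by simp)).mono fun z hz => hz.differentiableAt (by simp)
  have heq : (fun z => prodRiesz (fderiv ℝ f z)) =ᶠ[𝓝 w] gradientPair f :=
    hfd.mono fun z hz => Prod.ext (gradient_prodMk_left_eq hz).symm
      (gradient_prodMk_right_eq hz).symm
  have hG := prodRiesz.hasFDerivAt.comp w
    ((hf.fderiv_right (m := 1) le_rfl).differentiableAt one_ne_zero).hasFDerivAt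
  exact hG.congr_of_eventuallyEq heq.symm

theorem inner_prodRiesz_hessian_comm {f : E × F → ℝ} {w : E × F} (hf : ContDiffAt ℝ 2 f w)
    (x y : E × F) :
    ⟪(prodRiesz (fderiv ℝ (fderiv ℝ f) w x)).1, y.1⟫ +
        ⟪(prodRiesz (fderiv ℝ (fderiv ℝ f) w x)).2, y.2⟫ =
      ⟪(prodRiesz (fderiv ℝ (fderiv ℝ f) w y)).1, x.1⟫ +
        ⟪(prodRiesz (fderiv ℝ (fderiv ℝ f) w y)).2, x.2⟫ := by
  rw [inner_prodRiesz_add, inner_prodRiesz_add, hf.isSymmSndFDerivAt (by simp)]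

end GradientPair

section DiscreteHamiltonianMap

variable {E : Type*} [NormedAddCommGroup E] [InnerProductSpace ℝ E]

theorem inner_sub_inner_eq_of_fst_eq_neg_of_symm {A : E × E → E} {B : E × E → E × E}
    (hB : ∀ x, (B x).1 = -x.2)
    (hsymm : ∀ x y, ⟪(B x).1, y.1⟫ + ⟪(B x).2, A y⟫ = ⟪(B y).1, x.1⟫ + ⟪(B y).2, A x⟫)
    (u v : E × E) :
    ⟪(B u).2, A v⟫ - ⟪A u, (B v).2⟫ = ⟪u.2, v.1⟫ - ⟪u.1, v.2⟫ := by
  have h := hsymm u v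
  rw [hB, hB, inner_neg_left, inner_neg_left] at h
  rw [real_inner_comm (B v).2, real_inner_comm v.2]
  linarith

variable [CompleteSpace E]

noncomputable def discreteHamiltonianMap (L : E × E → ℝ) (σ : E × E → E) (z : E × E) : E × E :=
  (σ z, gradient (fun y => L (z.1, y)) (σ z))

theorem inner_fderiv_discreteHamiltonianMap_sub_eq {L : E × E → ℝ} {σ : E × E → E} {qp : E × E}
    (hL : ContDiffAt ℝ 2 L (qp.1, σ qp)) (hσ : DifferentiableAt ℝ σ qp)
    (hinv : ∀ᶠ z in 𝓝 qp, -gradient (fun x => L (x, σ z)) z.1 = z.2) (u v : E × E) :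
    ⟪(fderiv ℝ (discreteHamiltonianMap L σ) qp u).2,
        (fderiv ℝ (discreteHamiltonianMap L σ) qp v).1⟫ -
      ⟪(fderiv ℝ (discreteHamiltonianMap L σ) qp u).1,
        (fderiv ℝ (discreteHamiltonianMap L σ) qp v).2⟫ =
    ⟪u.2, v.1⟫ - ⟪u.1, v.2⟫ := by
  set A := fderiv ℝ σ qp
  set ψ' := (fst ℝ E E).prod A
  set B := (prodRiesz ∘L fderiv ℝ (fderiv ℝ L) (qp.1, σ qp)) ∘L ψ'
  have hψ : HasFDerivAt (fun z => (z.1, σ z)) ψ' qp := hasFDerivAt_fst.prodMk hσ.hasFDerivAt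
  have hB : HasFDerivAt (fun z => gradientPair L (z.1, σ z)) B qp :=
    ((hasFDerivAt_gradientPair hL).comp qp hψ :)
  have hB₁ : ∀ x, (B x).1 = -x.2 := by
    have h : HasFDerivAt (fun z => (gradientPair L (z.1, σ z)).1) (-snd ℝ E E) qp :=
      hasFDerivAt_snd.neg.congr_of_eventuallyEq
        (hinv.mono fun z hz => by simp [gradientPair, ← hz])
    intro x
    simpa using DFunLike.congr_fun (hB.fst.unique h) x
  have hΦ : HasFDerivAt (discreteHamiltonianMap L σ) (A.prod (snd ℝ E E ∘L B)) qp :=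
    hσ.hasFDerivAt.prodMk hB.snd
  rw [hΦ.fderiv]
  exact inner_sub_inner_eq_of_fst_eq_neg_of_symm hB₁
    (fun x y => inner_prodRiesz_hessian_comm hL (ψ' x) (ψ' y)) u v

end DiscreteHamiltonianMap

/-- If `σ` is a C¹ local inverse of the discrete Legendre transform `𝔽⁻L_d`
(i.e. `−D₁L_d(q, σ(q,p)) = p` on the open set `U`), then the discrete Hamiltonian map
`Φ(q,p) = (σ(q,p), D₂L_d(q, σ(q,p)))` is symplectic on `U`. -/
theorem stmt_4 {n : ℕ}
    (Ld : EuclideanSpace ℝ (Fin n) × EuclideanSpace ℝ (Fin n) → ℝ)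
    (hLd : ContDiff ℝ 2 Ld)
    (U : Set (EuclideanSpace ℝ (Fin n) × EuclideanSpace ℝ (Fin n)))
    (hU : IsOpen U)
    (σ : EuclideanSpace ℝ (Fin n) × EuclideanSpace ℝ (Fin n) → EuclideanSpace ℝ (Fin n))
    (hσ : ContDiffOn ℝ 1 σ U)
    (hinv : ∀ qp ∈ U, -grad1 Ld qp.1 (σ qp) = qp.2) :
    ∀ qp ∈ U, ∀ u v : EuclideanSpace ℝ (Fin n) × EuclideanSpace ℝ (Fin n),
      Omega (fderiv ℝ (fun z => (σ z, grad2 Ld z.1 (σ z))) qp u)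
          (fderiv ℝ (fun z => (σ z, grad2 Ld z.1 (σ z))) qp v)
        = Omega u v := by
  intro qp hqp u v
  exact inner_fderiv_discreteHamiltonianMap_sub_eq hLd.contDiffAt
    ((hσ.contDiffAt (hU.mem_nhds hqp)).differentiableAt one_ne_zero)
    (eventually_of_mem (hU.mem_nhds hqp) hinv) u v
end

section
/- Let L_d : ℝ^n × ℝ^n → ℝ be a differentiable discrete Lagrangian and A an n×n real matrix generating a one-parameter group of linear symmetries of L_d, i.e. L_d(exp(tA) q_0, exp(tA) q_1) = L_d(q_0, q_1) for all t ∈ ℝ and all (q_0,q_1) ∈ ℝ^n × ℝ^n. Define the discrete momentum J_d(q_0, q_1) = ⟨D_2 L_d(q_0, q_1), A q_1⟩. Then J_d is conserved along solutions of the discrete Euler–Lagrange equations: if (q_0,…,q_N) satisfies D_1 L_d(q_k, q_{k+1}) + D_2 L_d(q_{k-1}, q_k) = 0 for k = 1,…,N−1, then J_d(q_{k-1}, q_k) = J_d(q_k, q_{k+1}) for all such k. -/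
/-- Partial derivative of a discrete Lagrangian with respect to its first argument. -/
noncomputable def D1 {n : ℕ}
    (Ld : EuclideanSpace ℝ (Fin n) × EuclideanSpace ℝ (Fin n) → ℝ)
    (a b : EuclideanSpace ℝ (Fin n)) : EuclideanSpace ℝ (Fin n) →L[ℝ] ℝ :=
  (fderiv ℝ Ld (a, b)).comp (ContinuousLinearMap.inl ℝ _ _)

/-- Partial derivative of a discrete Lagrangian with respect to its second argument. -/
noncomputable def D2 {n : ℕ}
    (Ld : EuclideanSpace ℝ (Fin n) × EuclideanSpace ℝ (Fin n) → ℝ)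
    (a b : EuclideanSpace ℝ (Fin n)) : EuclideanSpace ℝ (Fin n) →L[ℝ] ℝ :=
  (fderiv ℝ Ld (a, b)).comp (ContinuousLinearMap.inr ℝ _ _)

/-- The linear operator on `ℝⁿ` determined by an `n × n` matrix. -/
noncomputable def matOp {n : ℕ} (A : Matrix (Fin n) (Fin n) ℝ) :
    EuclideanSpace ℝ (Fin n) →L[ℝ] EuclideanSpace ℝ (Fin n) :=
  LinearMap.toContinuousLinearMap (Matrix.toEuclideanLin A)

/-!
Differentiating the invariance `L_d(exp(tA) q₀, exp(tA) q₁) = L_d(q₀, q₁)` at `t = 0` gives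
`D₁L_d(q₀, q₁)(A q₀) + D₂L_d(q₀, q₁)(A q₁) = 0`. At `(q₀, q₁) = (q_k, q_{k+1})` the discrete
Euler–Lagrange equation turns the first term into `-D₂L_d(q_{k-1}, q_k)(A q_k)`.
-/

section OneParameterGroup

variable {E F : Type*} [NormedAddCommGroup E] [NormedSpace ℝ E] [CompleteSpace E]
  [NormedAddCommGroup F] [NormedSpace ℝ F]

theorem hasDerivAt_exp_smul_apply_zero (B : E →L[ℝ] E) (x : E) :
    HasDerivAt (fun t : ℝ => NormedSpace.exp (t • B) x) (B x) 0 := by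
  simpa using (hasDerivAt_exp_smul_const (𝕂 := ℝ) B 0).clm_apply (hasDerivAt_const 0 x)

theorem fderiv_apply_generator_eq_zero_of_invariant {f : E × E → F} {x y : E}
    (hf : DifferentiableAt ℝ f (x, y)) (B : E →L[ℝ] E)
    (hinv : ∀ t : ℝ, f (NormedSpace.exp (t • B) x, NormedSpace.exp (t • B) y) = f (x, y)) :
    fderiv ℝ f (x, y) (B x, B y) = 0 := by
  have horbit : HasDerivAt
      (fun t : ℝ => (NormedSpace.exp (t • B) x, NormedSpace.exp (t • B) y)) (B x, B y) 0 :=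
    (hasDerivAt_exp_smul_apply_zero B x).prodMk (hasDerivAt_exp_smul_apply_zero B y)
  have hf' : HasFDerivAt f (fderiv ℝ f (x, y))
      (NormedSpace.exp ((0 : ℝ) • B) x, NormedSpace.exp ((0 : ℝ) • B) y) := by
    simpa using hf.hasFDerivAt
  exact (hf'.comp_hasDerivAt 0 horbit).unique
    ((hasDerivAt_const 0 (f (x, y))).congr_of_eventuallyEq (.of_forall hinv))

end OneParameterGroup

theorem D1_apply_add_D2_apply {n : ℕ}
    (Ld : EuclideanSpace ℝ (Fin n) × EuclideanSpace ℝ (Fin n) → ℝ)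
    (a b v w : EuclideanSpace ℝ (Fin n)) :
    D1 Ld a b v + D2 Ld a b w = fderiv ℝ Ld (a, b) (v, w) := by
  simp only [D1, D2, ContinuousLinearMap.comp_apply, ContinuousLinearMap.inl_apply,
    ContinuousLinearMap.inr_apply, ← map_add, Prod.mk_add_mk, add_zero, zero_add]

theorem D1_add_D2_matOp_eq_zero_of_invariant {n : ℕ}
    (Ld : EuclideanSpace ℝ (Fin n) × EuclideanSpace ℝ (Fin n) → ℝ)
    (A : Matrix (Fin n) (Fin n) ℝ) {q0 q1 : EuclideanSpace ℝ (Fin n)}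
    (hLd : DifferentiableAt ℝ Ld (q0, q1))
    (hsym : ∀ t : ℝ,
      Ld (NormedSpace.exp (t • matOp A) q0, NormedSpace.exp (t • matOp A) q1) = Ld (q0, q1)) :
    D1 Ld q0 q1 (matOp A q0) + D2 Ld q0 q1 (matOp A q1) = 0 := by
  rw [D1_apply_add_D2_apply]
  exact fderiv_apply_generator_eq_zero_of_invariant hLd (matOp A) hsym

/-- If the one-parameter group of linear maps `exp(tA)` acting diagonally leaves the
discrete Lagrangian invariant, then the discrete momentum
`J_d(q_0,q_1) = ⟨D₂L_d(q_0,q_1), A q_1⟩` is conserved along solutions of the discrete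
Euler–Lagrange equations. -/
theorem stmt_5 {n N : ℕ}
    (Ld : EuclideanSpace ℝ (Fin n) × EuclideanSpace ℝ (Fin n) → ℝ)
    (hLd : Differentiable ℝ Ld)
    (A : Matrix (Fin n) (Fin n) ℝ)
    (hsym : ∀ (t : ℝ) (q0 q1 : EuclideanSpace ℝ (Fin n)),
      Ld (NormedSpace.exp (t • matOp A) q0, NormedSpace.exp (t • matOp A) q1)
        = Ld (q0, q1))
    (q : ℕ → EuclideanSpace ℝ (Fin n))
    (hDEL : ∀ k : ℕ, 1 ≤ k → k ≤ N - 1 →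
      D1 Ld (q k) (q (k + 1)) + D2 Ld (q (k - 1)) (q k) = 0) :
    ∀ k : ℕ, 1 ≤ k → k ≤ N - 1 →
      D2 Ld (q (k - 1)) (q k) (matOp A (q k))
        = D2 Ld (q k) (q (k + 1)) (matOp A (q (k + 1))) := by
  intro k hk hkN
  have hnoether := D1_add_D2_matOp_eq_zero_of_invariant Ld A (hLd (q k, q (k + 1)))
    (fun t => hsym t (q k) (q (k + 1)))
  have hDEL_k := congrArg (· (matOp A (q k))) (hDEL k hk hkN)
  simp only [add_apply, zero_apply] at hDEL_k
  linarith
end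

section
/- Let l_d : Matrix(n,n,ℝ) → ℝ be a differentiable function (reduced discrete Lagrangian), N ≥ 2, and (g_0, …, g_N) a sequence of invertible n×n real matrices with W_k = g_k^{-1} g_{k+1}. Then the following are equivalent: (i) for every family of differentiable curves g_k(ε) of invertible matrices with g_k(0) = g_k, with g_0(ε) = g_0 and g_N(ε) = g_N constant, the reduced action sum Σ_{k=0}^{N-1} l_d(g_k(ε)^{-1} g_{k+1}(ε)) has vanishing derivative at ε = 0; (ii) the discrete Euler–Poincaré equations hold: for every k ∈ {1,…,N−1} and every n×n matrix η, D l_d(W_k)[η W_k] − D l_d(W_{k-1})[W_{k-1} η] = 0, where D l_d(W)[·] denotes the Fréchet derivative of l_d at W. -/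
attribute [local instance]
  Matrix.linftyOpNormedAddCommGroup Matrix.linftyOpNormedRing Matrix.linftyOpNormedAlgebra

/-!
Write a variation as `δg_k = g_k η_k`. Then `W_k = g_k⁻¹ g_{k+1}` varies by
`W_k η_{k+1} − η_k W_k`, and summation by parts against the fixed endpoints (`η_0 = η_N = 0`)
shows that the first variation of the action is `−∑_{k=1}^{N-1} EP_k(η_k)`, where `EP_k(η)` is
the left side of the `k`-th Euler–Poincaré equation. So the equations imply criticality, and
conversely the variation moving only `g_k`, along `ε ↦ g_k exp(ε η)`, has first variation
`−EP_k(η)`.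
-/

open Finset NormedSpace

section

variable {ι : Type*} [Fintype ι] [DecidableEq ι]

theorem Matrix.hasDerivAt_nonsing_inv {c : ℝ → Matrix ι ι ℝ} {c' : Matrix ι ι ℝ} {t : ℝ}
    (hc : HasDerivAt c c' t) (hu : IsUnit (c t)) :
    HasDerivAt (fun ε => (c ε)⁻¹) (-((c t)⁻¹ * c' * (c t)⁻¹)) t := by
  have hinv := hasFDerivAt_ringInverse (𝕜 := ℝ) hu.unit
  rw [hu.unit_spec] at hinv
  have h := hinv.comp_hasDerivAt t hc
  simp only [Function.comp_def, ← Ring.inverse_unit, hu.unit_spec,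
    ← Matrix.nonsing_inv_eq_ringInverse] at h
  exact h

theorem Matrix.hasDerivAt_nonsing_inv_mul {a b : ℝ → Matrix ι ι ℝ} {ξ ζ : Matrix ι ι ℝ} {t : ℝ}
    (ha : HasDerivAt a (a t * ξ) t) (hb : HasDerivAt b (b t * ζ) t) (hu : IsUnit (a t)) :
    HasDerivAt (fun ε => (a ε)⁻¹ * b ε)
      ((a t)⁻¹ * b t * ζ - ξ * ((a t)⁻¹ * b t)) t := by
  have hderiv : -((a t)⁻¹ * (a t * ξ) * (a t)⁻¹) * b t + (a t)⁻¹ * (b t * ζ)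
      = (a t)⁻¹ * b t * ζ - ξ * ((a t)⁻¹ * b t) := by
    simp only [← mul_assoc, Matrix.nonsing_inv_mul _ ((Matrix.isUnit_iff_isUnit_det _).mp hu),
      one_mul]
    noncomm_ring
  exact hderiv ▸ (Matrix.hasDerivAt_nonsing_inv ha hu).fun_mul hb

theorem hasDerivAt_mul_exp_smul (A η : Matrix ι ι ℝ) :
    HasDerivAt (fun ε : ℝ => A * exp (ε • η)) (A * η) 0 := by
  have h := (hasDerivAt_exp_smul_const (𝕂 := ℝ) η 0).const_mul A
  simp only [zero_smul, exp_zero, one_mul] at h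
  exact h

theorem Finset.sum_range_succ_sub_eq_sum_range_sub_succ {M : Type*} [AddCommGroup M]
    (u v : ℕ → M) (m : ℕ) (hu : u m = 0) (hv : v 0 = 0) :
    ∑ k ∈ range (m + 1), (u k - v k) = ∑ k ∈ range m, (u k - v (k + 1)) := by
  rw [sum_sub_distrib, sum_sub_distrib, sum_range_succ, sum_range_succ', hu, hv]
  abel

noncomputable def reducedAction (ld : Matrix ι ι ℝ → ℝ) (N : ℕ) (gc : ℕ → ℝ → Matrix ι ι ℝ)
    (ε : ℝ) : ℝ :=
  ∑ k ∈ range N, ld ((gc k ε)⁻¹ * gc (k + 1) ε)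

/-- `(r*_{W_k} dl_d)(W_k) − (l*_{W_{k-1}} dl_d)(W_{k-1})` evaluated at `η`, where
`W_k = g_k⁻¹ g_{k+1}`. -/
noncomputable def eulerPoincare (ld : Matrix ι ι ℝ → ℝ) (g : ℕ → Matrix ι ι ℝ) (k : ℕ)
    (η : Matrix ι ι ℝ) : ℝ :=
  fderiv ℝ ld ((g k)⁻¹ * g (k + 1)) (η * ((g k)⁻¹ * g (k + 1)))
    - fderiv ℝ ld ((g (k - 1))⁻¹ * g k) ((g (k - 1))⁻¹ * g k * η)

theorem hasDerivAt_reducedAction {ld : Matrix ι ι ℝ → ℝ} {N : ℕ} {g : ℕ → Matrix ι ι ℝ}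
    {gc : ℕ → ℝ → Matrix ι ι ℝ} {η : ℕ → Matrix ι ι ℝ}
    (hld : ∀ k, DifferentiableAt ℝ ld ((g k)⁻¹ * g (k + 1))) (hg : ∀ k, IsUnit (g k))
    (h0 : ∀ k, gc k 0 = g k) (hgc : ∀ k, HasDerivAt (gc k) (g k * η k) 0)
    (hη0 : η 0 = 0) (hηN : η N = 0) :
    HasDerivAt (reducedAction ld N gc)
      (-∑ k ∈ range (N - 1), eulerPoincare ld g (k + 1) (η (k + 1))) 0 := by
  set W : ℕ → Matrix ι ι ℝ := fun k => (g k)⁻¹ * g (k + 1)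
  have hgc' (k : ℕ) : HasDerivAt (gc k) (gc k 0 * η k) 0 := by rw [h0]; exact hgc k
  have hterm (k : ℕ) : HasDerivAt (fun ε => ld ((gc k ε)⁻¹ * gc (k + 1) ε))
      (fderiv ℝ ld (W k) (W k * η (k + 1) - η k * W k)) 0 := by
    have hW := Matrix.hasDerivAt_nonsing_inv_mul (hgc' k) (hgc' (k + 1)) (h0 k ▸ hg k)
    rw [h0, h0] at hW
    exact (hld k).hasFDerivAt.comp_hasDerivAt_of_eq 0 hW (by simp only [h0])
  refine (HasDerivAt.fun_sum fun k _ => hterm k).congr_deriv ?_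
  cases N with
  | zero => simp
  | succ m =>
    simp only [map_sub, add_tsub_cancel_right]
    rw [sum_range_succ_sub_eq_sum_range_sub_succ _ _ _ (by simp [hηN]) (by simp [hη0]),
      ← sum_neg_distrib]
    refine sum_congr rfl fun k _ => ?_
    simp only [eulerPoincare, add_tsub_cancel_right, neg_sub]
    rfl

noncomputable def singleVariation (g : ℕ → Matrix ι ι ℝ) (k : ℕ) (η : Matrix ι ι ℝ) (j : ℕ)
    (ε : ℝ) : Matrix ι ι ℝ :=
  if j = k then g k * exp (ε • η) else g j

variable {g : ℕ → Matrix ι ι ℝ} {k : ℕ} {η : Matrix ι ι ℝ}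

theorem singleVariation_of_ne {j : ℕ} (hj : j ≠ k) (ε : ℝ) : singleVariation g k η j ε = g j :=
  if_neg hj

theorem singleVariation_apply_zero (j : ℕ) : singleVariation g k η j 0 = g j := by
  by_cases hj : j = k <;> simp [singleVariation, hj]

theorem isUnit_singleVariation (hg : ∀ j, IsUnit (g j)) (j : ℕ) (ε : ℝ) :
    IsUnit (singleVariation g k η j ε) := by
  unfold singleVariation
  split_ifs
  exacts [(hg k).mul (Matrix.isUnit_exp _), hg j]

theorem differentiable_singleVariation (j : ℕ) : Differentiable ℝ (singleVariation g k η j) := by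
  intro t
  unfold singleVariation
  split_ifs
  exacts [(hasDerivAt_exp_smul_const η t).differentiableAt.const_mul _,
    differentiableAt_const _]

theorem hasDerivAt_singleVariation (j : ℕ) :
    HasDerivAt (singleVariation g k η j) (g j * (Pi.single k η : ℕ → Matrix ι ι ℝ) j) 0 := by
  unfold singleVariation
  split_ifs with hj
  · subst hj
    simpa using hasDerivAt_mul_exp_smul (g j) η
  · rw [Pi.single_eq_of_ne hj, mul_zero]
    exact hasDerivAt_const 0 (g j)

theorem sum_eulerPoincare_single {ld : Matrix ι ι ℝ → ℝ} {N : ℕ}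
    (hk1 : 1 ≤ k) (hkN : k ≤ N - 1) :
    ∑ j ∈ range (N - 1), eulerPoincare ld g (j + 1) ((Pi.single k η : ℕ → Matrix ι ι ℝ) (j + 1)) =
      eulerPoincare ld g k η := by
  rw [sum_eq_single (k - 1)]
  · rw [Nat.sub_add_cancel hk1, Pi.single_eq_same]
  · intro j _ hj
    simp [eulerPoincare, Pi.single_eq_of_ne (show j + 1 ≠ k by omega)]
  · intro hk
    exact absurd (mem_range.mpr (by omega)) hk

end

theorem stmt_9_general {n N : ℕ}
    (ld : Matrix (Fin n) (Fin n) ℝ → ℝ) (hld : Differentiable ℝ ld)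
    (g : ℕ → Matrix (Fin n) (Fin n) ℝ) (hg : ∀ k, IsUnit (g k)) :
    (∀ gc : ℕ → ℝ → Matrix (Fin n) (Fin n) ℝ,
      (∀ k, Differentiable ℝ (gc k)) →
      (∀ k ε, IsUnit (gc k ε)) →
      (∀ k, gc k 0 = g k) →
      (∀ ε, gc 0 ε = g 0) →
      (∀ ε, gc N ε = g N) →
      deriv (fun ε => ∑ k ∈ Finset.range N, ld ((gc k ε)⁻¹ * gc (k + 1) ε)) 0 = 0)
    ↔
    (∀ k : ℕ, 1 ≤ k → k ≤ N - 1 → ∀ η : Matrix (Fin n) (Fin n) ℝ,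
      fderiv ℝ ld ((g k)⁻¹ * g (k + 1)) (η * ((g k)⁻¹ * g (k + 1)))
        - fderiv ℝ ld ((g (k - 1))⁻¹ * g k) (((g (k - 1))⁻¹ * g k) * η) = 0) := by
  constructor
  · intro hcrit k hk1 hkN η
    have hvar : HasDerivAt (reducedAction ld N (singleVariation g k η))
        (-eulerPoincare ld g k η) 0 := by
      rw [← sum_eulerPoincare_single hk1 hkN]
      exact hasDerivAt_reducedAction (fun _ => hld _) hg singleVariation_apply_zero
        hasDerivAt_singleVariation (by rw [Pi.single_eq_of_ne]; omega)
        (by rw [Pi.single_eq_of_ne]; omega)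
    have hcrit_k := hcrit (singleVariation g k η) differentiable_singleVariation
      (isUnit_singleVariation hg) singleVariation_apply_zero
      (singleVariation_of_ne (by omega)) (singleVariation_of_ne (by omega))
    exact neg_eq_zero.mp (hvar.deriv.symm.trans hcrit_k)
  · intro hEP gc hdiff _ h0 hstart hend
    set η : ℕ → Matrix (Fin n) (Fin n) ℝ := fun j => (g j)⁻¹ * deriv (gc j) 0
    have hgc (j : ℕ) : HasDerivAt (gc j) (g j * η j) 0 := by
      rw [← mul_assoc, Matrix.mul_nonsing_inv _ ((Matrix.isUnit_iff_isUnit_det _).mp (hg j)),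
        one_mul]
      exact (hdiff j 0).hasDerivAt
    have hη_of_const {j : ℕ} (hj : ∀ ε, gc j ε = g j) : η j = 0 := by
      have hconst : deriv (gc j) 0 = 0 := by rw [funext hj]; exact deriv_const 0 (g j)
      simp only [η, hconst, mul_zero]
    have hEP_sum : ∑ j ∈ range (N - 1), eulerPoincare ld g (j + 1) (η (j + 1)) = 0 :=
      sum_eq_zero fun j hj => hEP (j + 1) (by omega) (by rw [mem_range] at hj; omega) _
    refine (hasDerivAt_reducedAction (fun _ => hld _) hg h0 hgc (hη_of_const hstart)
      (hη_of_const hend)).deriv.trans ?_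
    rw [hEP_sum, neg_zero]

/-- A sequence `(g_0, …, g_N)` of invertible matrices, with `W_k = g_k⁻¹ g_{k+1}`, is a
critical point of the reduced action sum `∑_{k=0}^{N-1} l_d(W_k)` with respect to all
variations by differentiable curves of invertible matrices fixing the endpoints, iff the
discrete Euler–Poincaré equations
`Dl_d(W_k)[η W_k] − Dl_d(W_{k-1})[W_{k-1} η] = 0` hold for `k = 1, …, N−1` and all `η`. -/
theorem stmt_9 {n N : ℕ} (hN : 2 ≤ N)
    (ld : Matrix (Fin n) (Fin n) ℝ → ℝ) (hld : Differentiable ℝ ld)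
    (g : ℕ → Matrix (Fin n) (Fin n) ℝ) (hg : ∀ k, IsUnit (g k)) :
    (∀ gc : ℕ → ℝ → Matrix (Fin n) (Fin n) ℝ,
      (∀ k, Differentiable ℝ (gc k)) →
      (∀ k ε, IsUnit (gc k ε)) →
      (∀ k, gc k 0 = g k) →
      (∀ ε, gc 0 ε = g 0) →
      (∀ ε, gc N ε = g N) →
      deriv (fun ε => ∑ k ∈ Finset.range N, ld ((gc k ε)⁻¹ * gc (k + 1) ε)) 0 = 0)
    ↔
    (∀ k : ℕ, 1 ≤ k → k ≤ N - 1 → ∀ η : Matrix (Fin n) (Fin n) ℝ,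
      fderiv ℝ ld ((g k)⁻¹ * g (k + 1)) (η * ((g k)⁻¹ * g (k + 1)))
        - fderiv ℝ ld ((g (k - 1))⁻¹ * g k) (((g (k - 1))⁻¹ * g k) * η) = 0) :=
  stmt_9_general ld hld g hg
end

section
/- Let l_d : Matrix(n,n,ℝ) → ℝ be differentiable, N ≥ 2, and for each k ∈ {0,…,N−1} let f_k^-, f_k^+ be linear functionals on n×n matrices (discrete control forces in 𝔤*). Let (g_0,…,g_N) be invertible matrices with W_k = g_k^{-1} g_{k+1}. Then the discrete Lagrange–d'Alembert principle for Lie groups holds — namely, for every family of differentiable curves g_k(ε) of invertible matrices with g_k(0) = g_k, endpoints g_0, g_N fixed, and η_k = g_k^{-1}(dg_k/dε)(0), one has d/dε|_{ε=0} Σ_{k=0}^{N-1} l_d(W_k(ε)) + Σ_{k=0}^{N-1} (f_k^-(η_k) + f_k^+(η_{k+1})) = 0 — if and only if the controlled discrete Euler–Poincaré equations hold: for every k ∈ {1,…,N−1} and every matrix η, D l_d(W_{k-1})[W_{k-1} η] − D l_d(W_k)[η W_k] + f_{k-1}^+(η) + f_k^-(η) = 0. -/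
attribute [local instance]
  Matrix.linftyOpNormedAddCommGroup Matrix.linftyOpNormedRing Matrix.linftyOpNormedAlgebra

/-!
The whole argument takes place in a real Banach algebra `R`, of which `GL(n, ℝ)` is the group of
units. Differentiating `l_d(g_k(ε)⁻¹ g_{k+1}(ε))` with `d(g⁻¹) = -g⁻¹ (dg) g⁻¹` gives
`Dl_d(W_k)[W_k η_{k+1} - η_k W_k]`. Discrete summation by parts, using `η_0 = η_N = 0`, turns the
varied action plus the virtual work of the forces into `∑_k R_k(η_k)`, where `R_k` is the
residual of the `k`-th Euler–Poincaré equation. This vanishes if every `R_k` with `0 < k < N`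
does. Conversely, the variation `g_k exp(ε ξ)` of the single point `g_k` has `η = ξ` at `k` and
`0` elsewhere, so it isolates `R_k(ξ)`.
-/

open Finset
open scoped Ring

noncomputable section

variable {R : Type*} [NormedRing R] [NormedAlgebra ℝ R]

section

variable (ld : R → ℝ) (fm fp : ℕ → R →ₗ[ℝ] ℝ) (g : ℕ → R)

def actionVariation (N : ℕ) (η : ℕ → R) : ℝ :=
  ∑ k ∈ range N, fderiv ℝ ld ((g k)⁻¹ʳ * g (k + 1))
    ((g k)⁻¹ʳ * g (k + 1) * η (k + 1) - η k * ((g k)⁻¹ʳ * g (k + 1)))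

def eulerPoincareResidual (k : ℕ) (ξ : R) : ℝ :=
  fderiv ℝ ld ((g (k - 1))⁻¹ʳ * g k) ((g (k - 1))⁻¹ʳ * g k * ξ)
    - fderiv ℝ ld ((g k)⁻¹ʳ * g (k + 1)) (ξ * ((g k)⁻¹ʳ * g (k + 1))) + fp (k - 1) ξ + fm k ξ

@[simp]
theorem eulerPoincareResidual_zero (k : ℕ) : eulerPoincareResidual ld fm fp g k 0 = 0 := by
  simp [eulerPoincareResidual]

theorem actionVariation_add_work_eq_sum_residual {N : ℕ} {η : ℕ → R} (hη0 : η 0 = 0)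
    (hηN : η N = 0) :
    actionVariation ld g N η + ∑ k ∈ range N, (fm k (η k) + fp k (η (k + 1)))
      = ∑ k ∈ range N, eulerPoincareResidual ld fm fp g k (η k) := by
  set C : ℕ → ℝ := fun j =>
    fderiv ℝ ld ((g (j - 1))⁻¹ʳ * g j) ((g (j - 1))⁻¹ʳ * g j * η j) + fp (j - 1) (η j)
  set B : ℕ → ℝ := fun j =>
    fm j (η j) - fderiv ℝ ld ((g j)⁻¹ʳ * g (j + 1)) (η j * ((g j)⁻¹ʳ * g (j + 1)))
  -- `C 0` involves the junk value `g (0 - 1) = g 0`, but it vanishes because `η 0 = 0`.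
  have hshift : ∑ k ∈ range N, C (k + 1) = ∑ k ∈ range N, C k := by
    have h := (sum_range_succ' C N).symm.trans (sum_range_succ C N)
    simpa [C, hη0, hηN] using h
  calc actionVariation ld g N η + ∑ k ∈ range N, (fm k (η k) + fp k (η (k + 1)))
      = ∑ k ∈ range N, (C (k + 1) + B k) := by
        rw [actionVariation, ← sum_add_distrib]
        refine sum_congr rfl fun k _ => ?_
        simp only [C, B, Nat.add_sub_cancel, map_sub]
        ring
    _ = ∑ k ∈ range N, eulerPoincareResidual ld fm fp g k (η k) := by
        rw [sum_add_distrib, hshift, ← sum_add_distrib]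
        refine sum_congr rfl fun k _ => ?_
        simp only [C, B, eulerPoincareResidual]
        ring

end

section

variable [CompleteSpace R]

theorem HasDerivAt.ringInverse {u : ℝ → R} {u' : R} {t : ℝ} (hu : HasDerivAt u u' t)
    (hut : IsUnit (u t)) :
    HasDerivAt (fun ε => (u ε)⁻¹ʳ) (-((u t)⁻¹ʳ * u' * (u t)⁻¹ʳ)) t := by
  obtain ⟨x, hx⟩ := hut
  have h := (hx ▸ hasFDerivAt_ringInverse (𝕜 := ℝ) x).comp_hasDerivAt t hu
  rw [← hx]
  simpa [Ring.inverse_unit, Function.comp_def] using h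

theorem HasDerivAt.comp_ringInverse_mul (ld : R → ℝ) {u v : ℝ → R} {u' v' : R} {t : ℝ}
    (hld : DifferentiableAt ℝ ld ((u t)⁻¹ʳ * v t)) (hu : HasDerivAt u u' t)
    (hv : HasDerivAt v v' t) (hut : IsUnit (u t)) (hvt : IsUnit (v t)) :
    HasDerivAt (fun ε => ld ((u ε)⁻¹ʳ * v ε))
      (fderiv ℝ ld ((u t)⁻¹ʳ * v t)
        ((u t)⁻¹ʳ * v t * ((v t)⁻¹ʳ * v') - (u t)⁻¹ʳ * u' * ((u t)⁻¹ʳ * v t))) t := by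
  refine (hld.hasFDerivAt.comp_hasDerivAt t ((hu.ringInverse hut).mul hv)).congr_deriv ?_
  have hvv : v t * (v t)⁻¹ʳ = 1 := Ring.mul_inverse_cancel _ hvt
  congr 1
  calc -((u t)⁻¹ʳ * u' * (u t)⁻¹ʳ) * v t + (u t)⁻¹ʳ * v'
      = (u t)⁻¹ʳ * (v t * (v t)⁻¹ʳ) * v' - (u t)⁻¹ʳ * u' * ((u t)⁻¹ʳ * v t) := by
        rw [hvv]; noncomm_ring
    _ = _ := by noncomm_ring

variable (ld : R → ℝ) (fm fp : ℕ → R →ₗ[ℝ] ℝ) (g : ℕ → R)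

theorem hasDerivAt_sum_comp_ringInverse_mul (hld : Differentiable ℝ ld) (N : ℕ)
    {gc : ℕ → ℝ → R} (hdiff : ∀ k, Differentiable ℝ (gc k)) (hunit : ∀ k ε, IsUnit (gc k ε))
    (h0 : ∀ k, gc k 0 = g k) :
    HasDerivAt (fun ε => ∑ k ∈ range N, ld ((gc k ε)⁻¹ʳ * gc (k + 1) ε))
      (actionVariation ld g N fun k => (g k)⁻¹ʳ * deriv (gc k) 0) 0 := by
  refine HasDerivAt.fun_sum fun k _ => ?_
  have h := HasDerivAt.comp_ringInverse_mul ld (hld _) (hdiff k 0).hasDerivAt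
    (hdiff (k + 1) 0).hasDerivAt (hunit k 0) (hunit (k + 1) 0)
  rwa [h0, h0] at h

theorem deriv_action_add_work_eq_sum_residual (hld : Differentiable ℝ ld) {N : ℕ}
    {gc : ℕ → ℝ → R} (hdiff : ∀ k, Differentiable ℝ (gc k)) (hunit : ∀ k ε, IsUnit (gc k ε))
    (h0 : ∀ k, gc k 0 = g k) (hstart : ∀ ε, gc 0 ε = g 0) (hend : ∀ ε, gc N ε = g N) :
    deriv (fun ε => ∑ k ∈ range N, ld ((gc k ε)⁻¹ʳ * gc (k + 1) ε)) 0
        + ∑ k ∈ range N,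
            (fm k ((g k)⁻¹ʳ * deriv (gc k) 0) + fp k ((g (k + 1))⁻¹ʳ * deriv (gc (k + 1)) 0))
      = ∑ k ∈ range N, eulerPoincareResidual ld fm fp g k ((g k)⁻¹ʳ * deriv (gc k) 0) := by
  rw [(hasDerivAt_sum_comp_ringInverse_mul ld g hld N hdiff hunit h0).deriv]
  refine actionVariation_add_work_eq_sum_residual ld fm fp g ?_ ?_
  · simp [show gc 0 = fun _ => g 0 from funext hstart]
  · simp [show gc N = fun _ => g N from funext hend]

theorem exists_variation_supported_at (hg : ∀ j, IsUnit (g j)) (k : ℕ) (ξ : R) :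
    ∃ gc : ℕ → ℝ → R, (∀ j, Differentiable ℝ (gc j)) ∧ (∀ j ε, IsUnit (gc j ε)) ∧
      (∀ j, gc j 0 = g j) ∧ (∀ j ≠ k, ∀ ε, gc j ε = g j) ∧
      ∀ j, (g j)⁻¹ʳ * deriv (gc j) 0 = if j = k then ξ else 0 := by
  -- `NormedSpace.isUnit_exp` is stated for `ℚ`-algebras.
  let : NormedAlgebra ℚ R := NormedAlgebra.restrictScalars ℚ ℝ R
  have hexp (t : ℝ) : HasDerivAt (fun ε : ℝ => g k * NormedSpace.exp (ε • ξ))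
      (g k * (NormedSpace.exp (t • ξ) * ξ)) t :=
    (hasDerivAt_exp_smul_const ξ t).const_mul (g k)
  refine ⟨fun j ε => if j = k then g k * NormedSpace.exp (ε • ξ) else g j, fun j => ?_,
    fun j ε => ?_, fun j => ?_, fun j hj ε => if_neg hj, fun j => ?_⟩ <;> by_cases hj : j = k
  · simp only [if_pos hj]
    exact fun t => (hexp t).differentiableAt
  · simp [hj]
  · simpa [hj] using (hg k).mul (NormedSpace.isUnit_exp _)
  · simpa [hj] using hg j
  · simp [hj]
  · simp [hj]
  · simp [hj, (hexp 0).deriv, ← mul_assoc, Ring.inverse_mul_cancel _ (hg k)]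
  · simp [hj]

end

end

theorem stmt_11_general {n N : ℕ}
    (ld : Matrix (Fin n) (Fin n) ℝ → ℝ) (hld : Differentiable ℝ ld)
    (fm fp : ℕ → (Matrix (Fin n) (Fin n) ℝ →ₗ[ℝ] ℝ))
    (g : ℕ → Matrix (Fin n) (Fin n) ℝ) (hg : ∀ k, IsUnit (g k)) :
    (∀ gc : ℕ → ℝ → Matrix (Fin n) (Fin n) ℝ,
      (∀ k, Differentiable ℝ (gc k)) →
      (∀ k ε, IsUnit (gc k ε)) →
      (∀ k, gc k 0 = g k) →
      (∀ ε, gc 0 ε = g 0) →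
      (∀ ε, gc N ε = g N) →
      deriv (fun ε => ∑ k ∈ Finset.range N, ld ((gc k ε)⁻¹ * gc (k + 1) ε)) 0
        + ∑ k ∈ Finset.range N,
            (fm k ((g k)⁻¹ * deriv (gc k) 0)
              + fp k ((g (k + 1))⁻¹ * deriv (gc (k + 1)) 0)) = 0)
    ↔
    (∀ k : ℕ, 1 ≤ k → k ≤ N - 1 → ∀ η : Matrix (Fin n) (Fin n) ℝ,
      fderiv ℝ ld ((g (k - 1))⁻¹ * g k) (((g (k - 1))⁻¹ * g k) * η)
        - fderiv ℝ ld ((g k)⁻¹ * g (k + 1)) (η * ((g k)⁻¹ * g (k + 1)))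
        + fp (k - 1) η + fm k η = 0) := by
  simp only [Matrix.nonsing_inv_eq_ringInverse]
  constructor
  · intro hvar k hk1 hkN ξ
    obtain ⟨gc, hdiff, hunit, h0, hfixed, hη⟩ := exists_variation_supported_at g hg k ξ
    have hstart := hfixed 0 (by omega)
    have hend := hfixed N (by omega)
    have h := (deriv_action_add_work_eq_sum_residual ld fm fp g hld hdiff hunit h0 hstart
      hend).symm.trans (hvar gc hdiff hunit h0 hstart hend)
    rwa [sum_eq_single_of_mem k (mem_range.2 (by omega)) fun j _ hj => by simp [hη, hj], hη,
      if_pos rfl] at h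
  · intro hEP gc hdiff hunit h0 hstart hend
    refine (deriv_action_add_work_eq_sum_residual ld fm fp g hld hdiff hunit h0 hstart
      hend).trans (sum_eq_zero fun k hk => ?_)
    rcases Nat.eq_zero_or_pos k with rfl | hk1
    · simp [show gc 0 = fun _ => g 0 from funext hstart]
    · exact hEP k hk1 (by have := mem_range.1 hk; omega) _

/-- The discrete Lagrange–d'Alembert principle for Lie groups: a sequence
`(g_0, …, g_N)` of invertible matrices with `W_k = g_k⁻¹ g_{k+1}` and discrete control
forces `f_k^∓ ∈ 𝔤*` satisfies, for every variation by differentiable curves of invertible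
matrices fixing the endpoints (with `η_k = g_k⁻¹ (dg_k/dε)(0)`),
`d/dε|₀ ∑ l_d(W_k(ε)) + ∑ (f_k^-(η_k) + f_k^+(η_{k+1})) = 0`,
iff the controlled discrete Euler–Poincaré equations
`Dl_d(W_{k-1})[W_{k-1}η] − Dl_d(W_k)[ηW_k] + f_{k-1}^+(η) + f_k^-(η) = 0` hold for all
interior `k` and all `η`. -/
theorem stmt_11 {n N : ℕ} (hN : 2 ≤ N)
    (ld : Matrix (Fin n) (Fin n) ℝ → ℝ) (hld : Differentiable ℝ ld)
    (fm fp : ℕ → (Matrix (Fin n) (Fin n) ℝ →ₗ[ℝ] ℝ))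
    (g : ℕ → Matrix (Fin n) (Fin n) ℝ) (hg : ∀ k, IsUnit (g k)) :
    (∀ gc : ℕ → ℝ → Matrix (Fin n) (Fin n) ℝ,
      (∀ k, Differentiable ℝ (gc k)) →
      (∀ k ε, IsUnit (gc k ε)) →
      (∀ k, gc k 0 = g k) →
      (∀ ε, gc 0 ε = g 0) →
      (∀ ε, gc N ε = g N) →
      deriv (fun ε => ∑ k ∈ Finset.range N, ld ((gc k ε)⁻¹ * gc (k + 1) ε)) 0
        + ∑ k ∈ Finset.range N,
            (fm k ((g k)⁻¹ * deriv (gc k) 0)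
              + fp k ((g (k + 1))⁻¹ * deriv (gc (k + 1)) 0)) = 0)
    ↔
    (∀ k : ℕ, 1 ≤ k → k ≤ N - 1 → ∀ η : Matrix (Fin n) (Fin n) ℝ,
      fderiv ℝ ld ((g (k - 1))⁻¹ * g k) (((g (k - 1))⁻¹ * g k) * η)
        - fderiv ℝ ld ((g k)⁻¹ * g (k + 1)) (η * ((g k)⁻¹ * g (k + 1)))
        + fp (k - 1) η + fm k η = 0) :=
  stmt_11_general ld hld fm fp g hg
end

section
/- For ω, v, α, w ∈ ℝ³ let ξ, η be the 4×4 real matrices ξ = [[ω̂, v],[0, 0]] and η = [[α̂, w],[0, 0]] (elements of se(3)), where ·̂ is the hat map. Then the inverse right trivialized tangent of the Cayley map on se(3), dcay_ξ^{-1}(η) = (I₄ − ξ/2) η (I₄ + ξ/2), is again an element of se(3), and in the identification se(3) ≅ ℝ³ × ℝ³ its angular part equals (I₃ − ω̂/2 + (1/4) ω ωᵀ) α and its linear part equals −(1/2)(I₃ − ω̂/2) v̂ α + (I₃ − ω̂/2) w; i.e. the 6×6 matrix representation of dcay^{-1}_{(ω,v)} is the block matrix [[I₃ − ω̂/2 +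 (1/4) ω ωᵀ, 0₃],[−(1/2)(I₃ − ω̂/2) v̂, I₃ − ω̂/2]]. -/
/-- The hat map `ℝ³ → so(3)`, sending `ω` to the skew-symmetric matrix `ω̂`
with `ω̂ u = ω × u`. -/
def hat (ω : Fin 3 → ℝ) : Matrix (Fin 3) (Fin 3) ℝ :=
  !![0, -ω 2, ω 1; ω 2, 0, -ω 0; -ω 1, ω 0, 0]

/-- A vector of `ℝ³` as a `3 × 1` column matrix. -/
def colVec (v : Fin 3 → ℝ) : Matrix (Fin 3) (Fin 1) ℝ :=
  Matrix.of fun i _ => v i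

/-- The element of `se(3)` with angular part `ω` and linear part `v`, as the block
matrix `[[ω̂, v], [0, 0]]`. -/
def se3 (ω v : Fin 3 → ℝ) : Matrix (Fin 3 ⊕ Fin 1) (Fin 3 ⊕ Fin 1) ℝ :=
  Matrix.fromBlocks (hat ω) (colVec v) 0 0


set_option maxHeartbeats 4000000 in
lemma blockA (ω α : Fin 3 → ℝ) :
    (1 - (2⁻¹ : ℝ) • hat ω) * hat α * (1 + (2⁻¹ : ℝ) • hat ω)
      = hat ((1 - (2⁻¹ : ℝ) • hat ω + (4⁻¹ : ℝ) • Matrix.vecMulVec ω ω).mulVec α) := by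
  rw [Matrix.one_fin_three]
  ext i j
  fin_cases i <;> fin_cases j <;>
    · simp [hat, Matrix.mul_apply, Matrix.mulVec, Matrix.vecMulVec,
        Fin.sum_univ_succ, dotProduct]
      ring

set_option maxHeartbeats 4000000 in
lemma blockB (ω v α w : Fin 3 → ℝ) :
    (1 - (2⁻¹ : ℝ) • hat ω) * hat α * ((2⁻¹ : ℝ) • colVec v)
        + (1 - (2⁻¹ : ℝ) • hat ω) * colVec w
      = colVec (-(2⁻¹ : ℝ) • ((1 - (2⁻¹ : ℝ) • hat ω) * hat v).mulVec α
            + (1 - (2⁻¹ : ℝ) • hat ω).mulVec w) := by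
  rw [Matrix.one_fin_three]
  ext i j
  fin_cases i <;> fin_cases j <;>
    · simp [hat, colVec, Matrix.mul_apply, Matrix.mulVec,
        Fin.sum_univ_succ, dotProduct, Matrix.vecHead, Matrix.vecTail]
      ring

lemma oneSub (ω v : Fin 3 → ℝ) :
    (1 : Matrix (Fin 3 ⊕ Fin 1) (Fin 3 ⊕ Fin 1) ℝ) - (2⁻¹ : ℝ) • se3 ω v
      = Matrix.fromBlocks (1 - (2⁻¹ : ℝ) • hat ω) ((-(2⁻¹ : ℝ)) • colVec v) 0 1 := by
  rw [← Matrix.fromBlocks_one, se3, Matrix.fromBlocks_smul, sub_eq_add_neg,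
    Matrix.fromBlocks_neg, Matrix.fromBlocks_add]
  congr 1 <;> simp [sub_eq_add_neg]

lemma onePlus (ω v : Fin 3 → ℝ) :
    (1 : Matrix (Fin 3 ⊕ Fin 1) (Fin 3 ⊕ Fin 1) ℝ) + (2⁻¹ : ℝ) • se3 ω v
      = Matrix.fromBlocks (1 + (2⁻¹ : ℝ) • hat ω) ((2⁻¹ : ℝ) • colVec v) 0 1 := by
  rw [← Matrix.fromBlocks_one, se3, Matrix.fromBlocks_smul, Matrix.fromBlocks_add]
  congr 1 <;> simp

/-- For `ξ = (ω, v)` and `η = (α, w)` in `se(3)`, the inverse right trivialized tangent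
of the Cayley map, `dcay_ξ⁻¹(η) = (I₄ − ξ/2) η (I₄ + ξ/2)`, is again in `se(3)`: its
angular part is `(I₃ − ω̂/2 + ¼ωωᵀ)α` and its linear part is
`−½(I₃ − ω̂/2) v̂ α + (I₃ − ω̂/2) w`. -/
theorem stmt_17 (ω v α w : Fin 3 → ℝ) :
    (1 - (2⁻¹ : ℝ) • se3 ω v) * se3 α w * (1 + (2⁻¹ : ℝ) • se3 ω v)
      = se3
          ((1 - (2⁻¹ : ℝ) • hat ω + (4⁻¹ : ℝ) • Matrix.vecMulVec ω ω).mulVec α)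
          (-(2⁻¹ : ℝ) • ((1 - (2⁻¹ : ℝ) • hat ω) * hat v).mulVec α
            + (1 - (2⁻¹ : ℝ) • hat ω).mulVec w) := by
  rw [oneSub, onePlus, se3, se3, Matrix.fromBlocks_multiply, Matrix.fromBlocks_multiply]
  rw [← blockA ω α, ← blockB ω v α w]
  congr 1 <;> simp [Matrix.mul_add, mul_assoc]
end

section
/- Let x and y be n×n real matrices and let exp denote the matrix exponential. Then exp is differentiable at x and its derivative in direction y is given by the right trivialized tangent formula D exp(x)[y] = dexp_x(y) · exp(x), where dexp_x(y) = Σ_{j=0}^{∞} (1/(j+1)!) ad_x^j(y), ad_x(y) = xy − yx, and the series converges absolutely. -/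
/-!
Write `L`, `R` for left and right multiplication by `x`; they commute and `ad_x = L - R`.
Differentiating `exp z = 1 + ∑ z^(m+1)/(m+1)!` termwise (locally uniformly) gives
`D exp(x) = ∑_m (m+1)!⁻¹ ∑_{i+k=m} L^i R^k`. Expanding `L^i = ((L - R) + R)^i` binomially,
`∑_{i+k=m} L^i R^k = ∑_{j+k=m} C(m+1, j+1) (L - R)^j R^k`, and since
`C(m+1, j+1)/(m+1)! = 1/((j+1)! k!)` the `m`-th term of `D exp(x) y` is the `m`-th term of the
Cauchy product of `dexp_x y = ∑_j (L - R)^j y/(j+1)!` with `exp x = ∑_k x^k/k!`.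
-/

attribute [local instance]
  Matrix.linftyOpNormedAddCommGroup Matrix.linftyOpNormedRing Matrix.linftyOpNormedAlgebra

/-- The adjoint operator `ad_x(y) = xy − yx` on square matrices. -/
def ad {n : ℕ} (x y : Matrix (Fin n) (Fin n) ℝ) : Matrix (Fin n) (Fin n) ℝ :=
  x * y - y * x

open Finset LinearMap NormedSpace
open scoped Nat RightActions

theorem Commute.sum_antidiagonal_add_pow_mul_pow {R : Type*} [Semiring R] {d b : R}
    (h : Commute d b) (m : ℕ) :
    ∑ p ∈ antidiagonal m, (d + b) ^ p.1 * b ^ p.2 =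
      ∑ p ∈ antidiagonal m, (m + 1).choose (p.1 + 1) • (d ^ p.1 * b ^ p.2) := by
  induction m with
  | zero => simp
  | succ m ih =>
    have hb : ∀ p : ℕ × ℕ, (d + b) ^ p.1 * b ^ (p.2 + 1) = (d + b) ^ p.1 * b ^ p.2 * b := by
      intro p; rw [pow_succ, mul_assoc]
    rw [Nat.sum_antidiagonal_succ', Nat.sum_antidiagonal_succ', h.add_pow',
      Nat.sum_antidiagonal_succ', sum_congr rfl fun p _ => hb p, ← sum_mul, ih]
    simp only [pow_succ b, ← mul_assoc, sum_mul, smul_mul_assoc, Nat.choose_succ_succ' (m + 1),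
      add_smul, sum_add_distrib, Nat.choose_self, Nat.choose_succ_self, zero_smul, pow_zero,
      mul_one, one_smul]
    abel

theorem Commute.sum_antidiagonal_smul_pow_mul_sub_pow {𝕜 A : Type*} [Field 𝕜] [CharZero 𝕜]
    [Ring A] [Algebra 𝕜 A] {a b : A} (h : Commute a b) (m : ℕ) :
    ∑ p ∈ antidiagonal m, ((p.1 + 1)! * p.2 ! : 𝕜)⁻¹ • (b ^ p.2 * (a - b) ^ p.1) =
      ((m + 1)! : 𝕜)⁻¹ • ∑ p ∈ antidiagonal m, a ^ p.1 * b ^ p.2 := by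
  have hab : Commute (a - b) b := h.sub_left (Commute.refl b)
  have hexpand := hab.sum_antidiagonal_add_pow_mul_pow m
  rw [sub_add_cancel] at hexpand
  rw [hexpand, smul_sum]
  refine sum_congr rfl fun p hp => ?_
  rw [Finset.HasAntidiagonal.mem_antidiagonal] at hp
  rw [(hab.pow_pow p.1 p.2).eq, ← Nat.cast_smul_eq_nsmul 𝕜, smul_smul, ← hp,
    show p.1 + p.2 + 1 = p.1 + 1 + p.2 by ring, Nat.cast_add_choose]
  congr 1
  have : ((p.1 + 1 + p.2)! : 𝕜) ≠ 0 := mod_cast (p.1 + 1 + p.2).factorial_ne_zero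
  field_simp

theorem sum_antidiagonal_commutator_pow_mul_pow {𝕜 A : Type*} [Field 𝕜] [CharZero 𝕜]
    [Ring A] [Algebra 𝕜 A] (x y : A) (m : ℕ) :
    ∑ p ∈ antidiagonal m, ((p.1 + 1)! : 𝕜)⁻¹ • ((mulLeft 𝕜 x - mulRight 𝕜 x) ^ p.1) y *
        ((p.2 ! : 𝕜)⁻¹ • x ^ p.2) =
      ((m + 1)! : 𝕜)⁻¹ • ∑ p ∈ antidiagonal m, x ^ p.1 * y * x ^ p.2 := by
  have happly := congrArg (· y)
    ((commute_mulLeft_right (R := 𝕜) x x).sum_antidiagonal_smul_pow_mul_sub_pow (𝕜 := 𝕜) m)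
  simpa [LinearMap.sum_apply, Module.End.mul_apply, pow_mulLeft, pow_mulRight, mul_inv,
    smul_mul_smul_comm, mul_assoc, mul_comm, smul_smul] using happly

section Norms

variable {𝔸 : Type*} [NormedRing 𝔸]

theorem norm_pow_mul_le (x y : 𝔸) (i : ℕ) : ‖x ^ i * y‖ ≤ ‖x‖ ^ i * ‖y‖ := by
  induction i with
  | zero => simp
  | succ i ih =>
    calc ‖x ^ (i + 1) * y‖ ≤ ‖x‖ * ‖x ^ i * y‖ := by
          rw [pow_succ', mul_assoc]; exact norm_mul_le _ _
      _ ≤ ‖x‖ ^ (i + 1) * ‖y‖ := by rw [pow_succ', mul_assoc]; gcongr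

theorem norm_mul_pow_le (x y : 𝔸) (k : ℕ) : ‖y * x ^ k‖ ≤ ‖y‖ * ‖x‖ ^ k := by
  induction k with
  | zero => simp
  | succ k ih =>
    calc ‖y * x ^ (k + 1)‖ ≤ ‖y * x ^ k‖ * ‖x‖ := by
          rw [pow_succ, ← mul_assoc]; exact norm_mul_le _ _
      _ ≤ ‖y‖ * ‖x‖ ^ (k + 1) := by rw [pow_succ, ← mul_assoc]; gcongr

theorem norm_pow_mul_mul_pow_le (x y : 𝔸) (i k : ℕ) :
    ‖x ^ i * y * x ^ k‖ ≤ ‖x‖ ^ (i + k) * ‖y‖ :=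
  calc ‖x ^ i * y * x ^ k‖ ≤ ‖x ^ i * y‖ * ‖x‖ ^ k := norm_mul_pow_le _ _ _
    _ ≤ ‖x‖ ^ (i + k) * ‖y‖ := by
      rw [pow_add, mul_right_comm]; gcongr; exact norm_pow_mul_le _ _ _

end Norms

section NormedAlgebra

variable {𝕂 𝔸 : Type*} [RCLike 𝕂] [NormedRing 𝔸] [NormedAlgebra 𝕂 𝔸]

theorem norm_commutator_pow_apply_le (x y : 𝔸) (j : ℕ) :
    ‖((mulLeft 𝕂 x - mulRight 𝕂 x) ^ j) y‖ ≤ (2 * ‖x‖) ^ j * ‖y‖ := by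
  induction j with
  | zero => simp
  | succ j ih =>
    set z := ((mulLeft 𝕂 x - mulRight 𝕂 x) ^ j) y
    calc ‖((mulLeft 𝕂 x - mulRight 𝕂 x) ^ (j + 1)) y‖ = ‖x * z - z * x‖ := by
          rw [pow_succ', Module.End.mul_apply]; rfl
      _ ≤ ‖x‖ * ‖z‖ + ‖z‖ * ‖x‖ :=
          (norm_sub_le _ _).trans (add_le_add (norm_mul_le _ _) (norm_mul_le _ _))
      _ = 2 * ‖x‖ * ‖z‖ := by ring
      _ ≤ 2 * ‖x‖ * ((2 * ‖x‖) ^ j * ‖y‖) := by gcongr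
      _ = (2 * ‖x‖) ^ (j + 1) * ‖y‖ := by ring

theorem summable_norm_dexp_series (x y : 𝔸) :
    Summable fun j : ℕ => ‖((j + 1)! : 𝕂)⁻¹ • ((mulLeft 𝕂 x - mulRight 𝕂 x) ^ j) y‖ := by
  refine .of_nonneg_of_le (fun _ => norm_nonneg _) (fun j => ?_)
    ((Real.summable_pow_div_factorial (2 * ‖x‖)).mul_right ‖y‖)
  calc ‖((j + 1)! : 𝕂)⁻¹ • ((mulLeft 𝕂 x - mulRight 𝕂 x) ^ j) y‖
      = ((j + 1)! : ℝ)⁻¹ * ‖((mulLeft 𝕂 x - mulRight 𝕂 x) ^ j) y‖ := by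
        rw [norm_smul, norm_inv, RCLike.norm_natCast]
    _ ≤ (j ! : ℝ)⁻¹ * ((2 * ‖x‖) ^ j * ‖y‖) := by
        gcongr
        · exact j.le_succ
        · exact norm_commutator_pow_apply_le x y j
    _ = (2 * ‖x‖) ^ j / j ! * ‖y‖ := by ring

theorem hasFDerivAt_pow_succ (x : 𝔸) (m : ℕ) :
    HasFDerivAt (fun z : 𝔸 => z ^ (m + 1))
      (∑ p ∈ antidiagonal m, x ^ p.1 •> ContinuousLinearMap.id 𝕂 𝔸 <• x ^ p.2) x := by
  convert hasFDerivAt_pow' (m + 1) using 1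
  rw [Nat.sum_antidiagonal_eq_sum_range_succ
    (fun i k => x ^ i •> ContinuousLinearMap.id 𝕂 𝔸 <• x ^ k), ← sum_range_reflect]
  refine sum_congr rfl fun i hi => ?_
  rw [mem_range] at hi
  congr 3; omega

theorem norm_sum_antidiagonal_pow_smul_id_le (x : 𝔸) (m : ℕ) :
    ‖∑ p ∈ antidiagonal m, x ^ p.1 •> ContinuousLinearMap.id 𝕂 𝔸 <• x ^ p.2‖ ≤
      (m + 1) * ‖x‖ ^ m := by
  refine ContinuousLinearMap.opNorm_le_bound _ (by positivity) fun y => ?_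
  rw [_root_.sum_apply]
  calc _ ≤ ∑ p ∈ antidiagonal m, ‖x ^ p.1 * y * x ^ p.2‖ := by
        refine norm_sum_le_of_le _ fun p _ => ?_
        simp [mul_assoc]
    _ ≤ ∑ p ∈ antidiagonal m, ‖x‖ ^ m * ‖y‖ := by
        refine sum_le_sum fun p hp => ?_
        rw [← Finset.HasAntidiagonal.mem_antidiagonal.1 hp]
        exact norm_pow_mul_mul_pow_le x y p.1 p.2
    _ = (m + 1) * ‖x‖ ^ m * ‖y‖ := by simp [mul_assoc]

theorem norm_inv_factorial_smul_sum_antidiagonal_le {x : 𝔸} {r : ℝ} (hx : ‖x‖ ≤ r) (m : ℕ) :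
    ‖((m + 1)! : 𝕂)⁻¹ •
        ∑ p ∈ antidiagonal m, x ^ p.1 •> ContinuousLinearMap.id 𝕂 𝔸 <• x ^ p.2‖ ≤
      r ^ m / m ! :=
  calc _ ≤ ((m + 1)! : ℝ)⁻¹ * ((m + 1) * ‖x‖ ^ m) := by
        rw [norm_smul, norm_inv, RCLike.norm_natCast]
        gcongr
        exact norm_sum_antidiagonal_pow_smul_id_le x m
    _ ≤ ((m + 1)! : ℝ)⁻¹ * ((m + 1) * r ^ m) := by gcongr
    _ = r ^ m / m ! := by
        rw [Nat.factorial_succ]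
        push_cast
        field_simp

variable [CompleteSpace 𝔸]

theorem exp_eq_one_add_tsum :
    exp = fun x : 𝔸 => 1 + ∑' m : ℕ, ((m + 1)! : 𝕂)⁻¹ • x ^ (m + 1) := by
  ext x
  rw [congrFun (exp_eq_tsum 𝕂) x, (expSeries_summable' x).tsum_eq_zero_add]
  simp

theorem exists_hasFDerivAt_exp (x : 𝔸) :
    ∃ D : 𝔸 →L[𝕂] 𝔸, HasFDerivAt exp D x ∧ ∀ y,
      HasSum (fun m : ℕ => ((m + 1)! : 𝕂)⁻¹ • ∑ p ∈ antidiagonal m, x ^ p.1 * y * x ^ p.2)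
        (D y) := by
  set r := ‖x‖ + 1
  have hx : x ∈ Metric.ball 0 r := by simp [r]
  let T : ℕ → 𝔸 → 𝔸 →L[𝕂] 𝔸 := fun m z =>
    ((m + 1)! : 𝕂)⁻¹ •
      ∑ p ∈ antidiagonal m, z ^ p.1 •> ContinuousLinearMap.id 𝕂 𝔸 <• z ^ p.2
  have hT : ∀ m, ∀ z ∈ Metric.ball (0 : 𝔸) r, ‖T m z‖ ≤ r ^ m / m ! := fun m z hz =>
    norm_inv_factorial_smul_sum_antidiagonal_le (mem_ball_zero_iff.1 hz).le m
  let _ : NormedSpace ℝ 𝔸 := .restrictScalars ℝ 𝕂 𝔸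
  have hderiv := hasFDerivAt_tsum_of_isPreconnected (Real.summable_pow_div_factorial r)
    Metric.isOpen_ball (convex_ball (0 : 𝔸) r).isPreconnected
    (fun m z _ => (hasFDerivAt_pow_succ z m).const_smul ((m + 1)! : 𝕂)⁻¹) hT
    (Metric.mem_ball_self (by positivity)) (by simp) hx
  refine ⟨∑' m, T m x, ?_, fun y => ?_⟩
  · rw [exp_eq_one_add_tsum (𝕂 := 𝕂)]
    exact hderiv.const_add 1
  · have hsum := (Summable.of_norm_bounded (Real.summable_pow_div_factorial r)
      fun m => hT m x hx).hasSum.mapL (ContinuousLinearMap.apply 𝕂 𝔸 y)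
    simpa [T, mul_assoc] using hsum

variable (𝕂) in
noncomputable def dexp (x y : 𝔸) : 𝔸 :=
  ∑' j : ℕ, ((j + 1)! : 𝕂)⁻¹ • ((mulLeft 𝕂 x - mulRight 𝕂 x) ^ j) y

theorem exists_hasFDerivAt_exp_eq_dexp_mul_exp (x : 𝔸) :
    ∃ D : 𝔸 →L[𝕂] 𝔸, HasFDerivAt exp D x ∧ ∀ y, D y = dexp 𝕂 x y * exp x := by
  obtain ⟨D, hD, hDy⟩ := exists_hasFDerivAt_exp (𝕂 := 𝕂) x
  refine ⟨D, hD, fun y => ?_⟩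
  rw [dexp, congrFun (exp_eq_tsum 𝕂) x,
    tsum_mul_tsum_eq_tsum_sum_antidiagonal_of_summable_norm (summable_norm_dexp_series x y)
      (norm_expSeries_summable' x), ← (hDy y).tsum_eq]
  exact tsum_congr fun m => (sum_antidiagonal_commutator_pow_mul_pow x y m).symm

end NormedAlgebra

/-- The matrix exponential is (Fréchet) differentiable at any `x`, with derivative given
by the right trivialized tangent formula `D exp(x)[y] = dexp_x(y) · exp(x)`, where
`dexp_x(y) = ∑_{j≥0} ad_x^j(y)/(j+1)!`, the series converging absolutely. -/
theorem stmt_18 {n : ℕ} (x : Matrix (Fin n) (Fin n) ℝ) :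
    (∀ y : Matrix (Fin n) (Fin n) ℝ,
      Summable fun j : ℕ => ‖((Nat.factorial (j + 1) : ℝ))⁻¹ • (ad x)^[j] y‖)
    ∧ ∃ D : Matrix (Fin n) (Fin n) ℝ →L[ℝ] Matrix (Fin n) (Fin n) ℝ,
        HasFDerivAt NormedSpace.exp D x ∧
        ∀ y : Matrix (Fin n) (Fin n) ℝ,
          D y = (∑' j : ℕ, ((Nat.factorial (j + 1) : ℝ))⁻¹ • (ad x)^[j] y)
              * NormedSpace.exp x := by
  have h_ad : ∀ j y, (ad x)^[j] y = ((mulLeft ℝ x - mulRight ℝ x) ^ j) y := by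
    intro j y
    rw [Module.End.pow_apply]
    rfl
  simp only [h_ad]
  exact ⟨summable_norm_dexp_series x, exists_hasFDerivAt_exp_eq_dexp_mul_exp x⟩
end
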